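/- arXiv:1601.07327 — 5 statements merged into one kernel-verified Lean document; each statement's English description precedes it below -/
import Mathlib

section
/- Let Ω ⊂ ℝ^N be a ball centered at the origin, H an open half-space with 0 ∈ ∂H, and u ∈ W^{1,p}(Ω) for some p ∈ [1,∞). If B ∈ L^∞(ℝ), then ∫_Ω B(u)|∇u|^p dx = ∫_Ω B(u_H)|∇u_H|^p dx, where u_H is the two-point rearrangement of u with respect to H. -/
/-!
Write `ρ` for the reflection in `∂H = e^⊥`, and let `τ` swap `x` and `ρ x` exactly on the open
`ρ`-invariant set `S` of points where `x ∈ H` and `u x < u (ρ x)`, or `ρ x ∈ H` and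
`u (ρ x) < u x`. Then `u_H = u ∘ τ` on `Ω`, and `τ` is a measure-preserving involution of `Ω`.
Off the null hyperplane `∂H`, `u_H` is locally `max u (u ∘ ρ)` or `min u (u ∘ ρ)`, so its
derivative is that of `u ∘ ρ` on `S` and that of `u` elsewhere, as long as `∇u = ∇(u ∘ ρ)` where
`u = u ∘ ρ`. This holds almost everywhere, because a differentiable function has zero derivative
at every Lebesgue density point of its zero set. Hence `|∇u_H| = |∇u| ∘ τ` a.e. on `Ω`, and the
change of variables `τ` turns one integral into the other.
-/

open MeasureTheory Metric Filter Asymptotics Set Function Submodule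
open scoped Topology RealInnerProductSpace Pointwise

section MaxMin

variable {E : Type*} [NormedAddCommGroup E] [NormedSpace ℝ E] {f g : E → ℝ}
  {f' g' : E →L[ℝ] ℝ} {x : E}

theorem HasFDerivAt.max_of_eq (hf : HasFDerivAt f f' x) (hg : HasFDerivAt g f' x)
    (hfg : f x = g x) : HasFDerivAt (fun y => max (f y) (g y)) f' x := by
  have hgf : (fun y => g y - f y) =o[𝓝 x] fun y => y - x := by
    simpa [hfg] using hasFDerivAt_iff_isLittleO.mp (hg.sub hf)
  have hmax : (fun y => max (f y) (g y) - f y) =o[𝓝 x] fun y => y - x := by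
    refine (isBigO_of_le _ fun y => ?_).trans_isLittleO hgf
    rw [← max_sub_sub_right, sub_self, Real.norm_eq_abs, Real.norm_eq_abs]
    rcases le_total (g y - f y) 0 with h | h
    · simp [max_eq_left h]
    · simp [max_eq_right h]
  rw [hasFDerivAt_iff_isLittleO] at hf ⊢
  refine (hmax.add hf).congr_left fun y => ?_
  rw [← hfg, max_self]
  ring

theorem HasFDerivAt.max (hf : HasFDerivAt f f' x) (hg : HasFDerivAt g g' x)
    (hfg : f x = g x → f' = g') :
    HasFDerivAt (fun y => max (f y) (g y)) (if f x < g x then g' else f') x := by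
  rcases lt_trichotomy (f x) (g x) with hlt | heq | hgt
  · rw [if_pos hlt]
    refine hg.congr_of_eventuallyEq ?_
    filter_upwards [hf.continuousAt.eventually_lt hg.continuousAt hlt] with y hy
    exact max_eq_right hy.le
  · rw [if_neg heq.not_lt]
    exact hf.max_of_eq (hfg heq ▸ hg) heq
  · rw [if_neg hgt.not_gt]
    refine hf.congr_of_eventuallyEq ?_
    filter_upwards [hg.continuousAt.eventually_lt hf.continuousAt hgt] with y hy
    exact max_eq_left hy.le

theorem HasFDerivAt.min (hf : HasFDerivAt f f' x) (hg : HasFDerivAt g g' x)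
    (hfg : f x = g x → f' = g') :
    HasFDerivAt (fun y => min (f y) (g y)) (if g x < f x then g' else f') x := by
  have h := (hf.fun_neg.max hg.fun_neg fun h => by rw [hfg (neg_inj.mp h)]).fun_neg
  simp only [neg_lt_neg_iff, max_neg_neg, neg_neg] at h
  rwa [apply_ite Neg.neg, neg_neg, neg_neg] at h

end MaxMin

section Density

variable {E F : Type*} [NormedAddCommGroup E] [NormedSpace ℝ E] [FiniteDimensional ℝ E]
  [MeasurableSpace E] [BorelSpace E] [NormedAddCommGroup F] [NormedSpace ℝ F]
  (μ : Measure E) [μ.IsAddHaarMeasure]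

theorem tendsto_addHaar_closedBall_inter_preimage_closedBall {L : E →L[ℝ] F} (hL : L ≠ 0) :
    Tendsto (fun ε => μ (closedBall 0 1 ∩ L ⁻¹' closedBall 0 ε)) (𝓝[>] 0) (𝓝 0) := by
  have hker : μ (⋂ ε > (0 : ℝ), closedBall 0 1 ∩ L ⁻¹' closedBall 0 ε) = 0 := by
    refine measure_mono_null (fun w hw => ?_)
      (Measure.addHaar_submodule μ (LinearMap.ker (L : E →ₗ[ℝ] F)) ?_)
    · simp only [mem_iInter, mem_inter_iff, mem_preimage, mem_closedBall, dist_zero_right] at hw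
      exact norm_le_zero_iff.mp (le_of_forall_pos_le_add fun ε hε => by simpa using (hw ε hε).2)
    · exact fun htop => hL (ContinuousLinearMap.coe_injective (LinearMap.ker_eq_top.mp htop))
  rw [← hker]
  refine tendsto_measure_biInter_gt (fun ε _ => ?_) (fun ε δ _ hεδ => ?_) ⟨1, one_pos, ?_⟩
  · exact (isClosed_closedBall.inter (isClosed_closedBall.preimage L.continuous)).nullMeasurableSet
  · exact inter_subset_inter_right _ (preimage_mono (closedBall_subset_closedBall hεδ))
  · exact (measure_mono inter_subset_left).trans_lt measure_closedBall_lt_top |>.ne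

theorem HasFDerivAt.eventually_measure_inter_div_le {h : E → F} {L : E →L[ℝ] F} {s : Set E}
    {x : E} (hh : HasFDerivAt h L x) (hxs : x ∈ s) (h0 : ∀ y ∈ s, h y = 0) {ε : ℝ}
    (hε : 0 < ε) :
    ∀ᶠ r in 𝓝[>] 0, μ (s ∩ closedBall x r) / μ (closedBall x r) ≤
      μ (closedBall 0 1 ∩ L ⁻¹' closedBall 0 ε) / μ (closedBall 0 1) := by
  obtain ⟨δ, hδ, hball⟩ :=
    Metric.eventually_nhds_iff.mp (isLittleO_iff.mp (hasFDerivAt_iff_isLittleO.mp hh) hε)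
  filter_upwards [Ioo_mem_nhdsGT hδ] with r ⟨hr, hrδ⟩
  set K := closedBall (0 : E) 1 ∩ L ⁻¹' closedBall 0 ε
  have hsub : s ∩ closedBall x r ⊆ x +ᵥ r • K := by
    rintro y ⟨hys, hyr⟩
    rw [mem_closedBall, dist_eq_norm] at hyr
    have hLy : ‖L (y - x)‖ ≤ ε * r := by
      have := @hball y (by rw [dist_eq_norm]; exact hyr.trans_lt hrδ)
      rw [h0 y hys, h0 x hxs, sub_zero, zero_sub, norm_neg] at this
      exact this.trans (by gcongr)
    refine ⟨r • r⁻¹ • (y - x), ⟨r⁻¹ • (y - x), ⟨?_, ?_⟩, rfl⟩, ?_⟩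
    · rw [mem_closedBall, dist_zero_right, norm_smul, Real.norm_of_nonneg (inv_nonneg.2 hr.le)]
      exact inv_mul_le_one_of_le₀ hyr hr.le
    · rw [mem_preimage, mem_closedBall, dist_zero_right, map_smul, norm_smul,
        Real.norm_of_nonneg (inv_nonneg.2 hr.le), inv_mul_le_iff₀ hr]
      linarith
    · simp [smul_smul, hr.ne']
  have hr0 : ENNReal.ofReal (r ^ Module.finrank ℝ E) ≠ 0 := by positivity
  calc μ (s ∩ closedBall x r) / μ (closedBall x r)
      ≤ μ (x +ᵥ r • K) / μ (closedBall x r) := by gcongr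
    _ = ENNReal.ofReal (r ^ Module.finrank ℝ E) * μ K /
          (ENNReal.ofReal (r ^ Module.finrank ℝ E) * μ (closedBall 0 1)) := by
      rw [measure_vadd, Measure.addHaar_smul_of_nonneg μ hr.le,
        Measure.addHaar_closedBall' μ x hr.le]
    _ = μ K / μ (closedBall 0 1) := ENNReal.mul_div_mul_left _ _ hr0 ENNReal.ofReal_ne_top

theorem HasFDerivAt.eq_zero_of_tendsto_measure_inter_div {h : E → F} {L : E →L[ℝ] F}
    {s : Set E} {x : E} (hh : HasFDerivAt h L x) (hxs : x ∈ s) (h0 : ∀ y ∈ s, h y = 0)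
    (hdens : Tendsto (fun r => μ (s ∩ closedBall x r) / μ (closedBall x r)) (𝓝[>] 0)
      (𝓝 1)) :
    L = 0 := by
  by_contra hL
  have hK := ENNReal.Tendsto.div_const (b := μ (closedBall 0 1))
    (tendsto_addHaar_closedBall_inter_preimage_closedBall μ hL)
    (Or.inr (measure_closedBall_pos μ 0 one_pos).ne')
  rw [ENNReal.zero_div] at hK
  obtain ⟨ε, hεK, hε⟩ :=
    ((hK.eventually (gt_mem_nhds zero_lt_one)).and self_mem_nhdsWithin).exists
  have := le_of_tendsto hdens (hh.eventually_measure_inter_div_le μ hxs h0 hε)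
  exact (this.trans_lt hεK).false

theorem ae_fderiv_eq_zero_of_eq_zero (h : E → F) :
    ∀ᵐ x ∂μ, h x = 0 → DifferentiableAt ℝ h x → fderiv ℝ h x = 0 := by
  filter_upwards [ae_imp_of_ae_restrict
    (Besicovitch.ae_tendsto_measure_inter_div μ {x | h x = 0})] with x hdens hx hdiff
  exact hdiff.hasFDerivAt.eq_zero_of_tendsto_measure_inter_div μ hx (fun _ hy => hy) (hdens hx)

theorem ae_fderiv_eq_of_eq (f g : E → F) :
    ∀ᵐ x ∂μ, f x = g x → DifferentiableAt ℝ f x → DifferentiableAt ℝ g x →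
      fderiv ℝ f x = fderiv ℝ g x := by
  filter_upwards [ae_fderiv_eq_zero_of_eq_zero μ (f - g)] with x hx hfg hf hg
  rw [← sub_eq_zero, ← fderiv_sub hf hg]
  exact hx (sub_eq_zero.mpr hfg) (hf.sub hg)

end Density

theorem Function.Involutive.piecewise_id {α : Type*} {f : α → α} (hf : Involutive f)
    {s : Set α} [DecidablePred (· ∈ s)] (hfs : f ⁻¹' s = s) :
    Involutive (s.piecewise f id) := by
  intro x
  by_cases hx : x ∈ s
  · have hfx : f x ∈ s := by rwa [← mem_preimage, hfs]
    rw [piecewise_eq_of_mem _ _ _ hx, piecewise_eq_of_mem _ _ _ hfx, hf x]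
  · rw [piecewise_eq_of_notMem _ _ _ hx, id, piecewise_eq_of_notMem _ _ _ hx, id]

theorem Set.piecewise_id_preimage {α : Type*} {f : α → α} {s t : Set α}
    [DecidablePred (· ∈ s)] (hft : f ⁻¹' t = t) : s.piecewise f id ⁻¹' t = t := by
  rw [piecewise_preimage, hft, preimage_id, ite_same]

theorem MeasureTheory.MeasurePreserving.piecewise_id {α : Type*} [MeasurableSpace α]
    {μ : Measure α} {f : α → α} (hf : MeasurePreserving f μ μ) {s : Set α}
    [DecidablePred (· ∈ s)] (hs : MeasurableSet s) (hfs : f ⁻¹' s = s) :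
    MeasurePreserving (s.piecewise f id) μ μ := by
  refine ⟨hf.measurable.piecewise hs measurable_id, Measure.ext fun t ht => ?_⟩
  have hdisj : Disjoint (f ⁻¹' t ∩ s) (t \ s) :=
    disjoint_sdiff_right.mono_left inter_subset_right
  rw [Measure.map_apply (hf.measurable.piecewise hs measurable_id) ht, piecewise_preimage,
    Set.ite, preimage_id, measure_union hdisj (ht.diff hs), ← hfs, ← preimage_inter,
    hf.measure_preimage (ht.inter hs).nullMeasurableSet, hfs, measure_inter_add_sdiff _ hs]

section TwoPoint

variable {E : Type*} [NormedAddCommGroup E] [InnerProductSpace ℝ E]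

theorem inner_reflection_orthogonal_singleton (e x : E) :
    ⟪(ℝ ∙ e)ᗮ.reflection x, e⟫ = -⟪x, e⟫ := by
  calc ⟪(ℝ ∙ e)ᗮ.reflection x, e⟫
      = -⟪(ℝ ∙ e)ᗮ.reflection x, (ℝ ∙ e)ᗮ.reflection e⟫ := by
        rw [reflection_orthogonalComplement_singleton_eq_neg, inner_neg_right, neg_neg]
    _ = -⟪x, e⟫ := by rw [LinearIsometryEquiv.inner_map_map]

theorem reflection_orthogonal_singleton_eq_self {e x : E} (hx : ⟪x, e⟫ = 0) :
    (ℝ ∙ e)ᗮ.reflection x = x :=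
  reflection_mem_subspace_eq_self (mem_orthogonal_singleton_iff_inner_left.mpr hx)

theorem reflection_orthogonal_singleton_apply {e : E} (he : ‖e‖ = 1) (x : E) :
    (ℝ ∙ e)ᗮ.reflection x = x - (2 * ⟪x, e⟫) • e := by
  rw [reflection_orthogonal_apply, reflection_singleton_apply, he, real_inner_comm]
  simp only [one_pow, RCLike.ofReal_real_eq_id, id, div_one, neg_sub, two_smul,
    two_mul, add_smul]

/-- `u_H` for the half-space `H = {x | 0 < ⟪x, e⟫}`, whose reflection `σ_H` is
`(ℝ ∙ e)ᗮ.reflection`. -/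
noncomputable def twoPointRearrangement (e : E) (u : E → ℝ) (x : E) : ℝ :=
  if 0 < ⟪x, e⟫ then max (u x) (u ((ℝ ∙ e)ᗮ.reflection x))
  else min (u x) (u ((ℝ ∙ e)ᗮ.reflection x))

/-- The points of `Ω` where `twoPointRearrangement e u` takes the value `u (σ_H x) ≠ u x`. -/
def twoPointSwapSet (e : E) (Ω : Set E) (u : E → ℝ) : Set E :=
  {x ∈ Ω | 0 < ⟪x, e⟫ * (u ((ℝ ∙ e)ᗮ.reflection x) - u x)}

open Classical in
noncomputable def twoPointSwap (e : E) (Ω : Set E) (u : E → ℝ) : E → E :=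
  (twoPointSwapSet e Ω u).piecewise (ℝ ∙ e)ᗮ.reflection id

variable {e : E} {Ω : Set E} {u : E → ℝ}

theorem mem_twoPointSwapSet_of_pos {x : E} (hx : 0 < ⟪x, e⟫) (hxΩ : x ∈ Ω) :
    x ∈ twoPointSwapSet e Ω u ↔ u x < u ((ℝ ∙ e)ᗮ.reflection x) := by
  simp [twoPointSwapSet, hxΩ, mul_pos_iff_of_pos_left hx]

theorem mem_twoPointSwapSet_of_neg {x : E} (hx : ⟪x, e⟫ < 0) (hxΩ : x ∈ Ω) :
    x ∈ twoPointSwapSet e Ω u ↔ u ((ℝ ∙ e)ᗮ.reflection x) < u x := by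
  simp [twoPointSwapSet, hxΩ, ← smul_eq_mul, smul_pos_iff_of_neg_left hx]

theorem preimage_reflection_twoPointSwapSet (hΩ : (ℝ ∙ e)ᗮ.reflection ⁻¹' Ω = Ω) :
    (ℝ ∙ e)ᗮ.reflection ⁻¹' twoPointSwapSet e Ω u = twoPointSwapSet e Ω u := by
  ext x
  simp only [twoPointSwapSet, mem_preimage, mem_ofPred_eq, inner_reflection_orthogonal_singleton,
    reflection_reflection, ← mem_preimage (f := (ℝ ∙ e)ᗮ.reflection) (s := Ω), hΩ]
  constructor <;> rintro ⟨hx, h⟩ <;> exact ⟨hx, by linarith⟩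

theorem isOpen_twoPointSwapSet (hΩ : IsOpen Ω) (hρΩ : (ℝ ∙ e)ᗮ.reflection ⁻¹' Ω = Ω)
    (hu : ContinuousOn u Ω) : IsOpen (twoPointSwapSet e Ω u) := by
  have huρ : ContinuousOn (fun x => u ((ℝ ∙ e)ᗮ.reflection x)) Ω :=
    hu.comp (ℝ ∙ e)ᗮ.reflection.continuous.continuousOn fun x hx => by rwa [← hρΩ] at hx
  exact ((continuous_id.inner continuous_const).continuousOn.mul
    (huρ.sub hu)).isOpen_inter_preimage hΩ isOpen_Ioi

theorem twoPointRearrangement_eq_comp_twoPointSwap {x : E} (hx : x ∈ Ω) :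
    twoPointRearrangement e u x = u (twoPointSwap e Ω u x) := by
  classical
  simp only [twoPointRearrangement, twoPointSwap, piecewise, id]
  rcases lt_trichotomy ⟪x, e⟫ 0 with hneg | hzero | hpos
  · rw [if_neg hneg.not_gt, if_congr (mem_twoPointSwapSet_of_neg hneg hx) rfl rfl]
    split_ifs with h
    exacts [min_eq_right h.le, min_eq_left (not_lt.mp h)]
  · have hS : x ∉ twoPointSwapSet e Ω u := by simp [twoPointSwapSet, hzero]
    rw [if_neg hzero.not_gt, if_neg hS, reflection_orthogonal_singleton_eq_self hzero, min_self]
  · rw [if_pos hpos, if_congr (mem_twoPointSwapSet_of_pos hpos hx) rfl rfl]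
    split_ifs with h
    exacts [max_eq_right h.le, max_eq_left (not_lt.mp h)]

theorem norm_fderiv_comp_linearIsometryEquiv {F : Type*} [NormedAddCommGroup F]
    [NormedSpace ℝ F] (ρ : E ≃ₗᵢ[ℝ] E) (f : E → F) (x : E) :
    ‖fderiv ℝ (f ∘ ρ) x‖ = ‖fderiv ℝ f (ρ x)‖ := by
  rw [show f ∘ ρ = f ∘ ρ.toContinuousLinearEquiv from rfl,
    ContinuousLinearEquiv.comp_right_fderiv]
  exact ContinuousLinearMap.opNorm_comp_linearIsometryEquiv _ ρ

open Classical in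
theorem hasFDerivAt_twoPointRearrangement {x : E} (hx : x ∈ Ω) (hxe : ⟪x, e⟫ ≠ 0)
    (hu : DifferentiableAt ℝ u x) (huρ : DifferentiableAt ℝ u ((ℝ ∙ e)ᗮ.reflection x))
    (htie : u x = u ((ℝ ∙ e)ᗮ.reflection x) →
      fderiv ℝ u x = fderiv ℝ (u ∘ (ℝ ∙ e)ᗮ.reflection) x) :
    HasFDerivAt (twoPointRearrangement e u) (if x ∈ twoPointSwapSet e Ω u then
      fderiv ℝ (u ∘ (ℝ ∙ e)ᗮ.reflection) x else fderiv ℝ u x) x := by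
  have hf := hu.hasFDerivAt
  have hg := (huρ.comp x (ℝ ∙ e)ᗮ.reflection.differentiableAt).hasFDerivAt
  have hinner : ContinuousAt (fun y : E => ⟪y, e⟫) x :=
    (continuous_id.inner continuous_const).continuousAt
  rcases hxe.lt_or_gt with hneg | hpos
  · rw [if_congr (mem_twoPointSwapSet_of_neg hneg hx) rfl rfl]
    refine (hf.min hg htie).congr_of_eventuallyEq ?_
    filter_upwards [hinner.eventually_lt continuousAt_const hneg] with y hy
    exact if_neg (not_lt.mpr (le_of_lt hy))
  · rw [if_congr (mem_twoPointSwapSet_of_pos hpos hx) rfl rfl]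
    refine (hf.max hg htie).congr_of_eventuallyEq ?_
    filter_upwards [continuousAt_const.eventually_lt hinner hpos] with y hy
    exact if_pos hy

variable [FiniteDimensional ℝ E] [MeasurableSpace E] [BorelSpace E]

theorem ae_inner_ne_zero (μ : Measure E) [μ.IsAddHaarMeasure] (he : e ≠ 0) :
    ∀ᵐ x ∂μ, ⟪x, e⟫ ≠ 0 := by
  refine measure_mono_null (fun x hx => ?_)
    (Measure.addHaar_submodule μ (ℝ ∙ e)ᗮ fun htop => ?_)
  · exact mem_orthogonal_singleton_iff_inner_left.mpr (not_not.mp hx)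
  · have : ⟪e, e⟫ = 0 := mem_orthogonal_singleton_iff_inner_left.mp (htop ▸ mem_top)
    exact he (inner_self_eq_zero.mp this)

theorem ae_norm_fderiv_twoPointRearrangement (he : e ≠ 0) (hΩ : IsOpen Ω)
    (hρΩ : (ℝ ∙ e)ᗮ.reflection ⁻¹' Ω = Ω) (hu : DifferentiableOn ℝ u Ω) :
    ∀ᵐ x, x ∈ Ω → ‖fderiv ℝ (twoPointRearrangement e u) x‖ =
      ‖fderiv ℝ u (twoPointSwap e Ω u x)‖ := by
  classical
  filter_upwards [ae_inner_ne_zero volume he,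
    ae_fderiv_eq_of_eq volume u (u ∘ (ℝ ∙ e)ᗮ.reflection)] with x hxe htie hx
  have hρx : (ℝ ∙ e)ᗮ.reflection x ∈ Ω := by rwa [← mem_preimage, hρΩ]
  have hdu := hu.differentiableAt (hΩ.mem_nhds hx)
  have hduρ := hu.differentiableAt (hΩ.mem_nhds hρx)
  have hduρ' := hduρ.comp x (ℝ ∙ e)ᗮ.reflection.differentiableAt
  rw [(hasFDerivAt_twoPointRearrangement hx hxe hdu hduρ fun h => htie h hdu hduρ').fderiv,
    twoPointSwap]
  split_ifs with hS
  · rw [piecewise_eq_of_mem _ _ _ hS, norm_fderiv_comp_linearIsometryEquiv]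
  · rw [piecewise_eq_of_notMem _ _ _ hS, id]

theorem setIntegral_twoPointRearrangement {F : Type*} [NormedAddCommGroup F] [NormedSpace ℝ F]
    (he : e ≠ 0) (hΩ : IsOpen Ω) (hρΩ : (ℝ ∙ e)ᗮ.reflection ⁻¹' Ω = Ω)
    (hu : DifferentiableOn ℝ u Ω) (G : ℝ → ℝ → F) :
    ∫ x in Ω, G (twoPointRearrangement e u x) ‖fderiv ℝ (twoPointRearrangement e u) x‖ =
      ∫ x in Ω, G (u x) ‖fderiv ℝ u x‖ := by
  classical
  have hSρ := preimage_reflection_twoPointSwapSet (u := u) hρΩ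
  have hτ : MeasurePreserving (twoPointSwap e Ω u) :=
    (ℝ ∙ e)ᗮ.reflection.measurePreserving.piecewise_id
      (isOpen_twoPointSwapSet hΩ hρΩ hu.continuousOn).measurableSet hSρ
  have hτemb : MeasurableEmbedding (twoPointSwap e Ω u) :=
    (MeasurableEquiv.ofInvolutive _ ((reflection_involutive _).piecewise_id hSρ)
      hτ.measurable).measurableEmbedding
  calc ∫ x in Ω, G (twoPointRearrangement e u x) ‖fderiv ℝ (twoPointRearrangement e u) x‖
      = ∫ x in twoPointSwap e Ω u ⁻¹' Ω,
          G (u (twoPointSwap e Ω u x)) ‖fderiv ℝ u (twoPointSwap e Ω u x)‖ := by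
        rw [twoPointSwap, piecewise_id_preimage hρΩ]
        refine setIntegral_congr_ae hΩ.measurableSet ?_
        filter_upwards [ae_norm_fderiv_twoPointRearrangement he hΩ hρΩ hu] with x hnorm hx
        rw [twoPointRearrangement_eq_comp_twoPointSwap hx, hnorm hx, twoPointSwap]
    _ = ∫ x in Ω, G (u x) ‖fderiv ℝ u x‖ :=
        hτ.setIntegral_preimage_emb hτemb (fun y => G (u y) ‖fderiv ℝ u y‖) Ω

end TwoPoint

theorem stmt_4_general {N : ℕ} (R : ℝ)
    (e : EuclideanSpace ℝ (Fin N)) (he : ‖e‖ = 1)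
    (σ : EuclideanSpace ℝ (Fin N) → EuclideanSpace ℝ (Fin N))
    (hσ : ∀ x, σ x = x - (2 * ⟪x, e⟫) • e)
    (p : ℝ)
    (u : EuclideanSpace ℝ (Fin N) → ℝ)
    (hudiff : DifferentiableOn ℝ u (Metric.ball (0 : EuclideanSpace ℝ (Fin N)) R))
    (B : ℝ → ℝ)
    (uH : EuclideanSpace ℝ (Fin N) → ℝ)
    (huH : ∀ x, uH x =
      if 0 < ⟪x, e⟫ then max (u x) (u (σ x)) else min (u x) (u (σ x))) :
    ∫ x in Metric.ball (0 : EuclideanSpace ℝ (Fin N)) R, B (u x) * ‖fderiv ℝ u x‖ ^ p =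
    ∫ x in Metric.ball (0 : EuclideanSpace ℝ (Fin N)) R, B (uH x) * ‖fderiv ℝ uH x‖ ^ p := by
  have hσρ : σ = (ℝ ∙ e)ᗮ.reflection :=
    funext fun x => (hσ x).trans (reflection_orthogonal_singleton_apply he x).symm
  have huH' : uH = twoPointRearrangement e u := funext fun x => by
    rw [huH, hσρ, twoPointRearrangement]
  have hball : (ℝ ∙ e)ᗮ.reflection ⁻¹' ball 0 R = ball 0 R := by
    rw [LinearIsometryEquiv.preimage_ball, map_zero]
  rw [huH']
  exact (setIntegral_twoPointRearrangement (norm_ne_zero_iff.mp (he.trans_ne one_ne_zero))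
    isOpen_ball hball hudiff fun t r => B t * r ^ p).symm

theorem stmt_4 {N : ℕ} (hN : 1 ≤ N) (R : ℝ) (hR : 0 < R)
    (e : EuclideanSpace ℝ (Fin N)) (he : ‖e‖ = 1)
    (σ : EuclideanSpace ℝ (Fin N) → EuclideanSpace ℝ (Fin N))
    (hσ : ∀ x, σ x = x - (2 * ⟪x, e⟫) • e)
    (p : ℝ) (hp : 1 ≤ p)
    (u : EuclideanSpace ℝ (Fin N) → ℝ)
    (hudiff : DifferentiableOn ℝ u (Metric.ball (0 : EuclideanSpace ℝ (Fin N)) R))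
    (huLp : MemLp u (ENNReal.ofReal p)
      (volume.restrict (Metric.ball (0 : EuclideanSpace ℝ (Fin N)) R)))
    (hguLp : MemLp (fun x => ‖fderiv ℝ u x‖) (ENNReal.ofReal p)
      (volume.restrict (Metric.ball (0 : EuclideanSpace ℝ (Fin N)) R)))
    (B : ℝ → ℝ) (hBmeas : Measurable B) (hBbdd : ∃ M : ℝ, ∀ t, |B t| ≤ M)
    (uH : EuclideanSpace ℝ (Fin N) → ℝ)
    (huH : ∀ x, uH x =
      if 0 < ⟪x, e⟫ then max (u x) (u (σ x)) else min (u x) (u (σ x))) :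
    ∫ x in Metric.ball (0 : EuclideanSpace ℝ (Fin N)) R, B (u x) * ‖fderiv ℝ u x‖ ^ p =
    ∫ x in Metric.ball (0 : EuclideanSpace ℝ (Fin N)) R, B (uH x) * ‖fderiv ℝ uH x‖ ^ p :=
  stmt_4_general R e he σ hσ p u hudiff B uH huH
end

section
/- Let u ∈ L^p(ℝ^N) for some p ∈ [1,∞), let H be an open half-space with 0 ∈ ∂H such that u = u_H (i.e. u(x) ≥ u(σ_H x) for a.e. x ∈ H). Let φ ∈ C_0^∞(ℝ^N) be nonnegative, radial and radially nonincreasing with ∫φ = 1, and φ_ε(x) = ε^{−N}φ(x/ε). Then the mollification u_ε = u * φ_ε satisfies u_ε = (u_ε)_H, i.e. u_ε(x) ≥ u_ε(σ_H x) for all x ∈ H and all ε > 0. -/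
open MeasureTheory
open scoped RealInnerProductSpace

theorem stmt_6 {N : ℕ} (hN : 1 ≤ N)
    (e : EuclideanSpace ℝ (Fin N)) (he : ‖e‖ = 1)
    (σ : EuclideanSpace ℝ (Fin N) → EuclideanSpace ℝ (Fin N))
    (hσ : ∀ x, σ x = x - (2 * ⟪x, e⟫) • e)
    (p : ℝ) (hp : 1 ≤ p)
    (u : EuclideanSpace ℝ (Fin N) → ℝ)
    (huLp : MemLp u (ENNReal.ofReal p) volume)
    (huH : ∀ᵐ x ∂volume, 0 < ⟪x, e⟫ → u (σ x) ≤ u x)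
    (φ : EuclideanSpace ℝ (Fin N) → ℝ)
    (hφsmooth : ContDiff ℝ (⊤ : ℕ∞) φ) (hφsupp : HasCompactSupport φ)
    (hφpos : ∀ x, 0 ≤ φ x) (hφint : ∫ x, φ x = 1)
    (hφrad : ∀ x y : EuclideanSpace ℝ (Fin N), ‖x‖ ≤ ‖y‖ → φ y ≤ φ x) :
    ∀ ε : ℝ, 0 < ε → ∀ x : EuclideanSpace ℝ (Fin N), 0 < ⟪x, e⟫ →
      (∫ y, u y * (ε ^ (-(N : ℝ)) * φ (ε⁻¹ • (σ x - y)))) ≤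
      (∫ y, u y * (ε ^ (-(N : ℝ)) * φ (ε⁻¹ • (x - y)))) := by
  intro ε hε x hx
  have hee : ⟪e, e⟫ = (1:ℝ) := by
    rw [real_inner_self_eq_norm_sq, he]; norm_num
  have hσadd : ∀ a b, σ (a + b) = σ a + σ b := by
    intro a b; simp only [hσ, inner_add_left]; module
  have hσsmul : ∀ (c : ℝ) a, σ (c • a) = c • σ a := by
    intro c a; simp only [hσ, real_inner_smul_left]; module
  have hσsub : ∀ a b, σ (a - b) = σ a - σ b := by
    intro a b
    have h1 := hσadd a (-b)
    have h2 := hσsmul (-1) b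
    simp only [neg_one_smul] at h2
    simp [sub_eq_add_neg, h1, h2]
  have hσe : ∀ z, ⟪σ z, e⟫ = -⟪z, e⟫ := by
    intro z; simp only [hσ, inner_sub_left, real_inner_smul_left, hee]; ring
  have hσσ : ∀ z, σ (σ z) = z := by
    intro z
    rw [hσ (σ z), hσe, hσ z]
    module
  have hσnormsq : ∀ z, ‖σ z‖ ^ 2 = ‖z‖ ^ 2 := by
    intro z
    rw [hσ, norm_sub_sq_real, real_inner_smul_right, norm_smul]
    simp only [he, Real.norm_eq_abs, mul_one]
    nlinarith [sq_abs (2 * ⟪z, e⟫)]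
  have hσnorm : ∀ z, ‖σ z‖ = ‖z‖ := by
    intro z
    have h := congrArg Real.sqrt (hσnormsq z)
    rwa [Real.sqrt_sq (norm_nonneg _), Real.sqrt_sq (norm_nonneg _)] at h
  have hφeq : ∀ a b : EuclideanSpace ℝ (Fin N), ‖a‖ = ‖b‖ → φ a = φ b :=
    fun a b h => le_antisymm (hφrad b a h.ge) (hφrad a b h.le)
  have hφσ : ∀ w, φ (σ w) = φ w := fun w => hφeq _ _ (hσnorm w)
  let L : EuclideanSpace ℝ (Fin N) ≃ₗᵢ[ℝ] EuclideanSpace ℝ (Fin N) :=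
    { toFun := σ
      invFun := σ
      left_inv := hσσ
      right_inv := hσσ
      map_add' := hσadd
      map_smul' := fun c a => by simpa using hσsmul c a
      norm_map' := hσnorm }
  have hL : ⇑L = σ := rfl
  have MP : MeasurePreserving σ volume volume := L.measurePreserving
  have hci : ∀ F : EuclideanSpace ℝ (Fin N) → ℝ, (∫ y, F (σ y)) = ∫ y, F y := fun F =>
    MeasureTheory.integral_comp L F
  set c : ℝ := ε ^ (-(N : ℝ)) with hcdef
  have hc0 : 0 ≤ c := (Real.rpow_pos_of_pos hε _).le
  let gx : EuclideanSpace ℝ (Fin N) → ℝ := fun y => c * φ (ε⁻¹ • (x - y))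
  let gs : EuclideanSpace ℝ (Fin N) → ℝ := fun y => c * φ (ε⁻¹ • (σ x - y))
  have hεinv : (ε⁻¹ : ℝ) ≠ 0 := inv_ne_zero hε.ne'
  -- continuity and compact support
  have key_cs : ∀ z : EuclideanSpace ℝ (Fin N),
      Continuous (fun y => c * φ (ε⁻¹ • (z - y))) ∧
      HasCompactSupport (fun y => c * φ (ε⁻¹ • (z - y))) := by
    intro z
    constructor
    · exact continuous_const.mul
        (hφsmooth.continuous.comp (by fun_prop))
    · let ψ : Homeomorph (EuclideanSpace ℝ (Fin N)) (EuclideanSpace ℝ (Fin N)) :=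
        ((Homeomorph.neg _).trans (Homeomorph.addLeft z)).trans
          (Homeomorph.smulOfNeZero ε⁻¹ hεinv)
      have hψ : (fun y => c * φ (ε⁻¹ • (z - y))) = fun y => c * (φ ∘ ψ) y := by
        funext y
        simp [ψ, Function.comp, sub_eq_add_neg]
      rw [hψ]
      exact (hφsupp.comp_homeomorph ψ).mul_left
  have hu_loc : LocallyIntegrable u volume :=
    huLp.locallyIntegrable (ENNReal.one_le_ofReal.mpr hp)
  have hint : ∀ z, Integrable (fun y => u y * (c * φ (ε⁻¹ • (z - y)))) := by
    intro z
    have h := hu_loc.integrable_smul_left_of_hasCompactSupport (key_cs z).1 (key_cs z).2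
    simp only [smul_eq_mul] at h
    exact h.congr (Filter.Eventually.of_forall fun y => mul_comm _ _)
  have I1 : Integrable (fun y => u y * gx y) := hint x
  have I2 : Integrable (fun y => u y * gs y) := hint (σ x)
  -- relations between gx, gs under σ
  have hgsσ : ∀ y, gs (σ y) = gx y := by
    intro y
    show c * φ (ε⁻¹ • (σ x - σ y)) = c * φ (ε⁻¹ • (x - y))
    rw [← hσsub, ← hσsmul, hφσ]
  have hgxσ : ∀ y, gx (σ y) = gs y := by
    intro y
    have h := hgsσ (σ y)
    rw [hσσ] at h
    exact h.symm
  have I3 : Integrable (fun y => u (σ y) * gx y) := by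
    have hfe : (fun y => u (σ y) * gx y) = (fun z => u z * gs z) ∘ σ := by
      funext y
      simp only [Function.comp]
      rw [hgsσ]
    rw [hfe]
    exact (MeasureTheory.integrable_comp L (fun z => u z * gs z)).mpr I2
  have I4 : Integrable (fun y => u (σ y) * gs y) := by
    have hfe : (fun y => u (σ y) * gs y) = (fun z => u z * gx z) ∘ σ := by
      funext y
      simp only [Function.comp]
      rw [hgxσ]
    rw [hfe]
    exact (MeasureTheory.integrable_comp L (fun z => u z * gx z)).mpr I1
  -- geometric key inequality
  have hkey : ∀ y, 0 < ⟪y, e⟫ → gs y ≤ gx y := by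
    intro y hy
    apply mul_le_mul_of_nonneg_left _ hc0
    apply hφrad
    rw [norm_smul, norm_smul]
    apply mul_le_mul_of_nonneg_left _ (norm_nonneg (ε⁻¹ : ℝ))
    have hsq : ‖x - y‖ ^ 2 ≤ ‖σ x - y‖ ^ 2 := by
      have h1 : σ x - y = (x - y) - (2 * ⟪x, e⟫) • e := by rw [hσ]; abel
      have hexp := norm_sub_sq_real (x - y) ((2 * ⟪x, e⟫) • e)
      rw [real_inner_smul_right, inner_sub_left, norm_smul] at hexp
      simp only [he, Real.norm_eq_abs, mul_one] at hexp
      rw [h1, hexp]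
      nlinarith [sq_abs (2 * ⟪x, e⟫), mul_pos hx hy]
    have h := Real.sqrt_le_sqrt hsq
    rwa [Real.sqrt_sq (norm_nonneg _), Real.sqrt_sq (norm_nonneg _)] at h
  -- a.e. facts
  have huH2 : ∀ᵐ y ∂(volume : Measure (EuclideanSpace ℝ (Fin N))),
      ⟪y, e⟫ < 0 → u y ≤ u (σ y) := by
    have h := MP.quasiMeasurePreserving.ae huH
    filter_upwards [h] with y hy hneg
    have h4 : 0 < ⟪σ y, e⟫ := by rw [hσe]; linarith
    have h5 := hy h4
    rwa [hσσ] at h5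
  have hbd : ∀ᵐ y ∂(volume : Measure (EuclideanSpace ℝ (Fin N))), ⟪y, e⟫ ≠ 0 := by
    have hK : LinearMap.ker (innerSL ℝ e).toLinearMap ≠ ⊤ := by
      intro h
      have h0 : ((innerSL ℝ e).toLinearMap : EuclideanSpace ℝ (Fin N) →ₗ[ℝ] ℝ) = 0 :=
        LinearMap.ker_eq_top.mp h
      have h1 : ⟪e, e⟫ = (0:ℝ) := by simpa using LinearMap.ext_iff.mp h0 e
      rw [hee] at h1; norm_num at h1
    have hvol : volume ((LinearMap.ker (innerSL ℝ e).toLinearMap :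
        Submodule ℝ (EuclideanSpace ℝ (Fin N))) : Set (EuclideanSpace ℝ (Fin N))) = 0 :=
      Measure.addHaar_submodule _ _ hK
    have h := measure_eq_zero_iff_ae_notMem.mp hvol
    filter_upwards [h] with y hy h0
    refine hy ?_
    have h0' : ⟪e, y⟫ = (0:ℝ) := by rw [real_inner_comm]; exact h0
    simp only [SetLike.mem_coe, LinearMap.mem_ker, ContinuousLinearMap.coe_coe]
    simpa using h0' 
  -- nonnegativity of the symmetrized integrand
  have J_nonneg : 0 ≤ ∫ y, (u y - u (σ y)) * (gx y - gs y) := by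
    apply integral_nonneg_of_ae
    filter_upwards [huH, huH2, hbd] with y h1 h2 h3
    rcases lt_trichotomy (⟪y, e⟫ : ℝ) 0 with hlt | heq | hgt
    · have hu : u y ≤ u (σ y) := h2 hlt
      have hg : gx y ≤ gs y := by
        have h4 : 0 < ⟪σ y, e⟫ := by rw [hσe]; linarith
        have h5 := hkey (σ y) h4
        rwa [hgsσ, hgxσ] at h5
      have h6 := mul_nonneg (sub_nonneg.2 hu) (sub_nonneg.2 hg)
      have h7 : (u y - u (σ y)) * (gx y - gs y) = (u (σ y) - u y) * (gs y - gx y) := by ring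
      rw [h7]; exact h6
    · exact absurd heq h3
    · have hu := h1 hgt
      have hg := hkey y hgt
      exact mul_nonneg (by linarith) (by linarith)
  -- expand
  have hJ : (∫ y, (u y - u (σ y)) * (gx y - gs y)) =
      ((∫ y, u y * gx y) - ∫ y, u y * gs y) - (∫ y, u (σ y) * gx y) +
        ∫ y, u (σ y) * gs y := by
    have hfe : (fun y => (u y - u (σ y)) * (gx y - gs y)) =
        fun y => u y * gx y - u y * gs y - u (σ y) * gx y + u (σ y) * gs y := by
      funext y; ring
    have Ib : Integrable (fun y => u y * gx y - u y * gs y) volume := by exact I1.sub I2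
    have Ia : Integrable (fun y => u y * gx y - u y * gs y - u (σ y) * gx y) volume := by
      exact Ib.sub I3
    rw [hfe, integral_add Ia I4, integral_sub Ib I3, integral_sub I1 I2]
  -- change of variables identifications
  have hC : (∫ y, u y * gs y) = ∫ y, u (σ y) * gx y := by
    rw [← hci (fun y => u y * gs y)]
    congr 1
    funext z
    rw [hgsσ]
  have hD : (∫ y, u y * gx y) = ∫ y, u (σ y) * gs y := by
    rw [← hci (fun y => u y * gx y)]
    congr 1
    funext z
    rw [hgxσ]
  rw [hJ, ← hC, ← hD] at J_nonneg
  show (∫ y, u y * gs y) ≤ ∫ y, u y * gx y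
  linarith
end

section
/- Let u ∈ L^p(ℝ^N), p ∈ [1,∞), and H an open half-space with 0 ∈ ∂H such that σ_H u = u_H (i.e. u(x) ≤ u(σ_H x) for a.e. x ∈ H). Then for every ε > 0, the mollification u_ε with a nonnegative radial radially-nonincreasing smooth kernel satisfies σ_H(u_ε) = (u_ε)_H. -/
open MeasureTheory
open scoped RealInnerProductSpace

theorem stmt_7 {N : ℕ} (hN : 1 ≤ N)
    (e : EuclideanSpace ℝ (Fin N)) (he : ‖e‖ = 1)
    (σ : EuclideanSpace ℝ (Fin N) → EuclideanSpace ℝ (Fin N))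
    (hσ : ∀ x, σ x = x - (2 * ⟪x, e⟫) • e)
    (p : ℝ) (hp : 1 ≤ p)
    (u : EuclideanSpace ℝ (Fin N) → ℝ)
    (huLp : MemLp u (ENNReal.ofReal p) volume)
    (huH : ∀ᵐ x ∂volume, 0 < ⟪x, e⟫ → u x ≤ u (σ x))
    (φ : EuclideanSpace ℝ (Fin N) → ℝ)
    (hφsmooth : ContDiff ℝ (⊤ : ℕ∞) φ) (hφsupp : HasCompactSupport φ)
    (hφpos : ∀ x, 0 ≤ φ x) (hφint : ∫ x, φ x = 1)
    (hφrad : ∀ x y : EuclideanSpace ℝ (Fin N), ‖x‖ ≤ ‖y‖ → φ y ≤ φ x) :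
    ∀ ε : ℝ, 0 < ε → ∀ x : EuclideanSpace ℝ (Fin N), 0 < ⟪x, e⟫ →
      (∫ y, u y * (ε ^ (-(N : ℝ)) * φ (ε⁻¹ • (x - y)))) ≤
      (∫ y, u y * (ε ^ (-(N : ℝ)) * φ (ε⁻¹ • (σ x - y)))) := by
  intro ε hε x hx
  have hee : ⟪e, e⟫ = 1 := by
    rw [real_inner_self_eq_norm_sq, he]; norm_num
  -- basic identities for σ
  have hσinner : ∀ z, ⟪σ z, e⟫ = -⟪z, e⟫ := by
    intro z
    rw [hσ, inner_sub_left, real_inner_smul_left, hee]; ring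
  have hσnorm : ∀ z, ‖σ z‖ = ‖z‖ := by
    intro z
    have h2 : ‖σ z‖ ^ 2 = ‖z‖ ^ 2 := by
      rw [hσ, norm_sub_sq_real, real_inner_smul_right, norm_smul, mul_pow, he,
        Real.norm_eq_abs, sq_abs]
      ring
    have := congrArg Real.sqrt h2
    rwa [Real.sqrt_sq (norm_nonneg _), Real.sqrt_sq (norm_nonneg _)] at this
  have hinv : ∀ z, σ (σ z) = z := by
    intro z
    rw [hσ (σ z), hσinner, hσ z]
    module
  have hadd : ∀ a b, σ (a + b) = σ a + σ b := by
    intro a b; rw [hσ, hσ, hσ, inner_add_left]; module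
  have hsmulσ : ∀ (c : ℝ) a, σ (c • a) = c • σ a := by
    intro c a; rw [hσ, hσ, real_inner_smul_left]; module
  have hsub : ∀ a b, σ (a - b) = σ a - σ b := by
    intro a b; rw [hσ, hσ, hσ, inner_sub_left]; module
  -- σ as a linear isometry equivalence
  let σL : EuclideanSpace ℝ (Fin N) ≃ₗᵢ[ℝ] EuclideanSpace ℝ (Fin N) :=
    { toFun := σ
      invFun := σ
      left_inv := hinv
      right_inv := hinv
      map_add' := hadd
      map_smul' := hsmulσ
      norm_map' := hσnorm }
  have hmp : MeasurePreserving σ (volume : Measure (EuclideanSpace ℝ (Fin N))) volume :=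
    σL.measurePreserving
  have hemb : MeasurableEmbedding σ := σL.toHomeomorph.measurableEmbedding
  -- the kernel
  set c : ℝ := ε ^ (-(N : ℝ)) with hc
  have hcnn : 0 ≤ c := Real.rpow_nonneg hε.le _
  set g : EuclideanSpace ℝ (Fin N) → ℝ := fun z => c * φ (ε⁻¹ • z) with hg
  have hεne : (ε : ℝ) ≠ 0 := ne_of_gt hε
  have hgcont : Continuous g :=
    continuous_const.mul (hφsmooth.continuous.comp (continuous_const_smul _))
  have hgsupp : HasCompactSupport g := by
    have : HasCompactSupport (φ ∘ (Homeomorph.smulOfNeZero (ε⁻¹) (inv_ne_zero hεne))) :=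
      hφsupp.comp_homeomorph _
    have h2 : HasCompactSupport (fun z => φ (ε⁻¹ • z)) := this
    exact ((h2.mul_left (f := fun _ => c)) : HasCompactSupport _)
  have hgσ : ∀ z, g (σ z) = g z := by
    intro z
    have hn : ‖ε⁻¹ • σ z‖ = ‖ε⁻¹ • z‖ := by rw [norm_smul, norm_smul, hσnorm]
    have h1 := hφrad (ε⁻¹ • z) (ε⁻¹ • σ z) (le_of_eq hn.symm)
    have h2 := hφrad (ε⁻¹ • σ z) (ε⁻¹ • z) (le_of_eq hn)
    simp only [hg]
    rw [le_antisymm h1 h2]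
  -- key geometric inequality
  have hsq : ∀ y, ‖σ x - y‖ ^ 2 = ‖x - y‖ ^ 2 + 4 * ⟪x, e⟫ * ⟪y, e⟫ := by
    intro y
    have hrw : σ x - y = (x - y) - (2 * ⟪x, e⟫) • e := by rw [hσ]; module
    rw [hrw, norm_sub_sq_real, real_inner_smul_right, inner_sub_left, norm_smul]
    simp [he, mul_pow, sq_abs]
    ring
  have hmono : ∀ y, 0 ≤ ⟪y, e⟫ → g (σ x - y) ≤ g (x - y) := by
    intro y hy
    have h2 : ‖x - y‖ ^ 2 ≤ ‖σ x - y‖ ^ 2 := by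
      rw [hsq y]; nlinarith [mul_nonneg (mul_nonneg (by norm_num : (0:ℝ) ≤ 4) hx.le) hy]
    have hn : ‖x - y‖ ≤ ‖σ x - y‖ := by
      nlinarith [norm_nonneg (x - y), norm_nonneg (σ x - y)]
    have : ‖ε⁻¹ • (x - y)‖ ≤ ‖ε⁻¹ • (σ x - y)‖ := by
      rw [norm_smul, norm_smul]
      exact mul_le_mul_of_nonneg_left hn (abs_nonneg _)
    exact mul_le_mul_of_nonneg_left (hφrad _ _ this) hcnn
  have hmono' : ∀ y, ⟪y, e⟫ ≤ 0 → g (x - y) ≤ g (σ x - y) := by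
    intro y hy
    have h2 : ‖σ x - y‖ ^ 2 ≤ ‖x - y‖ ^ 2 := by
      rw [hsq y]; nlinarith [mul_nonneg (mul_nonneg (by norm_num : (0:ℝ) ≤ 4) hx.le) (neg_nonneg.mpr hy)]
    have hn : ‖σ x - y‖ ≤ ‖x - y‖ := by
      nlinarith [norm_nonneg (x - y), norm_nonneg (σ x - y)]
    have : ‖ε⁻¹ • (σ x - y)‖ ≤ ‖ε⁻¹ • (x - y)‖ := by
      rw [norm_smul, norm_smul]
      exact mul_le_mul_of_nonneg_left hn (abs_nonneg _)
    exact mul_le_mul_of_nonneg_left (hφrad _ _ this) hcnn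
  -- integrability
  have huloc : LocallyIntegrable u (volume : Measure (EuclideanSpace ℝ (Fin N))) :=
    huLp.locallyIntegrable (by
      rw [← ENNReal.ofReal_one]
      exact ENNReal.ofReal_le_ofReal hp)
  have hconv := HasCompactSupport.convolutionExists_right
    (ContinuousLinearMap.mul ℝ ℝ) hgsupp huloc hgcont
  have intA : Integrable (fun y => u y * g (x - y)) volume := hconv x
  have intB : Integrable (fun y => u y * g (σ x - y)) volume := hconv (σ x)
  -- h = B - A
  set h : EuclideanSpace ℝ (Fin N) → ℝ :=
    fun y => u y * g (σ x - y) - u y * g (x - y) with hh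
  have inth : Integrable h volume := intB.sub intA
  have inthσ : Integrable (h ∘ σ) volume := (hmp.integrable_comp_emb hemb).mpr inth
  have hinteq : ∫ y, h (σ y) = ∫ y, h y := hmp.integral_comp hemb h
  -- pointwise identity for h y + h (σ y)
  have hpt : ∀ y, h y + h (σ y) = (u (σ y) - u y) * (g (x - y) - g (σ x - y)) := by
    intro y
    have e1 : σ x - σ y = σ (x - y) := (hsub x y).symm
    have e2 : x - σ y = σ (σ x - y) := by rw [hsub, hinv]
    simp only [hh, e1, e2, hgσ]
    ring
  -- a.e. nonnegativity of h + h ∘ σ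
  have huH2 : ∀ᵐ y ∂(volume : Measure (EuclideanSpace ℝ (Fin N))),
      0 < ⟪σ y, e⟫ → u (σ y) ≤ u (σ (σ y)) :=
    hmp.quasiMeasurePreserving.tendsto_ae.eventually huH
  have haenn : 0 ≤ᵐ[volume] fun y => h y + h (σ y) := by
    filter_upwards [huH, huH2] with y h1 h2
    rw [Pi.zero_apply, hpt y]
    rcases lt_trichotomy (⟪y, e⟫) 0 with hb | hb | hb
    · have hu' : u (σ y) ≤ u y := by
        have := h2 (by rw [hσinner]; linarith)
        rwa [hinv] at this
      have hA : u (σ y) - u y ≤ 0 := by linarith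
      have hB : g (x - y) - g (σ x - y) ≤ 0 := by have := hmono' y hb.le; linarith
      nlinarith
    · have hgeq : g (x - y) = g (σ x - y) :=
        le_antisymm (hmono' y hb.le) (hmono y hb.ge)
      rw [hgeq]; simp
    · exact mul_nonneg (by have := h1 hb; linarith)
        (by have := hmono y hb.le; linarith)
  -- conclusion
  have hsum : 0 ≤ ∫ y, (h y + h (σ y)) := integral_nonneg_of_ae haenn
  have hsplit : ∫ y, (h y + h (σ y)) = (∫ y, h y) + ∫ y, h (σ y) :=
    integral_add inth inthσ
  have h0 : 0 ≤ ∫ y, h y := by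
    rw [hsplit, hinteq] at hsum
    linarith
  have hs : ∫ y, h y = (∫ y, u y * g (σ x - y)) - ∫ y, u y * g (x - y) :=
    integral_sub intB intA
  rw [hs] at h0
  simp only [hg, hc] at h0
  linarith
end

section
/- Let 0 < θ < 1/2 and let h_θ(ξ) = ξ(1+|ξ|)^θ − sgn(ξ)[(1+|ξ|)^{1−θ} − 1]/(1−θ). Then for every M > 0 there is a constant C = C(M) > 0, independent of θ, such that |h_θ'(ξ)| ≤ Cθ for all |ξ| ≤ M; consequently |h_θ(ξ₁) − h_θ(ξ₂)| ≤ Cθ|ξ₁ − ξ₂| for all ξ₁, ξ₂ ∈ [−M, M]. -/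
/-!
For `ξ ≥ 0` the function `hfun θ` is smooth, and it is odd, so it is differentiable everywhere
with the even derivative `a ^ θ + θ |ξ| a ^ (θ - 1) - a ^ (-θ)`, `a = 1 + |ξ|`. This derivative is
nonnegative, and Bernoulli's inequality `a ^ θ ≤ 1 + θ |ξ|` together with `a ^ θ + a ^ (-θ) ≥ 2`
bounds it by `3 θ |ξ|`. The mean value theorem turns this into the Lipschitz bound, with `C = 3 M`.
-/

open Set

noncomputable def hfun (θ : ℝ) (ξ : ℝ) : ℝ :=
  ξ * (1 + |ξ|) ^ θ - Real.sign ξ * ((1 + |ξ|) ^ (1 - θ) - 1) / (1 - θ)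

theorem hasDerivAt_of_odd_of_hasDerivWithinAt_Ici {f f' : ℝ → ℝ} (hf : ∀ x, f (-x) = -f x)
    (hf' : ∀ x, f' (-x) = f' x) (h : ∀ x, 0 ≤ x → HasDerivWithinAt f (f' x) (Ici 0) x) (x : ℝ) :
    HasDerivAt f (f' x) x := by
  have hIic : ∀ y, y ≤ 0 → HasDerivWithinAt f (f' y) (Iic 0) y := by
    intro y hy
    have hcomp : HasDerivWithinAt (fun z => f (-z)) (f' (-y) * -1) (Iic 0) y :=
      (h (-y) (neg_nonneg.mpr hy)).comp y (hasDerivAt_neg y).hasDerivWithinAt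
        fun z (hz : z ≤ 0) => show 0 ≤ -z from neg_nonneg.mpr hz
    have hneg := hcomp.neg
    rw [hf', mul_neg_one, neg_neg] at hneg
    rwa [show (-fun z => f (-z)) = f from funext fun z => by simp [hf]] at hneg
  rcases lt_trichotomy x 0 with hx | rfl | hx
  · exact (hIic x hx.le).hasDerivAt (Iic_mem_nhds hx)
  · have hboth := (hIic 0 le_rfl).union (h 0 le_rfl)
    rwa [Iic_union_Ici, hasDerivWithinAt_univ] at hboth
  · exact (h x hx.le).hasDerivAt (Ici_mem_nhds hx)

theorem hfun_neg (θ x : ℝ) : hfun θ (-x) = -hfun θ x := by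
  simp only [hfun, abs_neg, Real.sign_neg]
  ring

theorem hfun_of_nonneg (θ : ℝ) {x : ℝ} (hx : 0 ≤ x) :
    hfun θ x = x * (1 + x) ^ θ - ((1 + x) ^ (1 - θ) - 1) / (1 - θ) := by
  rcases hx.eq_or_lt with rfl | hx
  · simp [hfun]
  · simp [hfun, abs_of_pos hx, Real.sign_of_pos hx]

noncomputable def hfunDeriv (θ ξ : ℝ) : ℝ :=
  (1 + |ξ|) ^ θ + θ * |ξ| * (1 + |ξ|) ^ (θ - 1) - (1 + |ξ|) ^ (-θ)

theorem hfunDeriv_neg (θ x : ℝ) : hfunDeriv θ (-x) = hfunDeriv θ x := by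
  simp only [hfunDeriv, abs_neg]

theorem hasDerivAt_hfun_model {θ : ℝ} (hθ : θ ≠ 1) {x : ℝ} (hx : 0 < 1 + x) :
    HasDerivAt (fun y => y * (1 + y) ^ θ - ((1 + y) ^ (1 - θ) - 1) / (1 - θ))
      ((1 + x) ^ θ + θ * x * (1 + x) ^ (θ - 1) - (1 + x) ^ (-θ)) x := by
  have hbase : HasDerivAt (fun y : ℝ => 1 + y) 1 x := (hasDerivAt_id x).const_add 1
  have hpow : ∀ p : ℝ, HasDerivAt (fun y : ℝ => (1 + y) ^ p) (1 * p * (1 + x) ^ (p - 1)) x :=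
    fun p => hbase.rpow_const (Or.inl hx.ne')
  refine (((hasDerivAt_id x).mul (hpow θ)).sub
    (((hpow (1 - θ)).sub_const 1).div_const (1 - θ))).congr_deriv ?_
  have hθ' : 1 - θ ≠ 0 := sub_ne_zero.mpr hθ.symm
  rw [show 1 - θ - 1 = -θ by ring]
  field_simp
  simp

theorem hasDerivAt_hfun {θ : ℝ} (hθ : θ ≠ 1) (ξ : ℝ) : HasDerivAt (hfun θ) (hfunDeriv θ ξ) ξ := by
  refine hasDerivAt_of_odd_of_hasDerivWithinAt_Ici (hfun_neg θ) (hfunDeriv_neg θ) ?_ ξ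
  intro x hx
  have hmodel := (hasDerivAt_hfun_model hθ (by linarith : (0 : ℝ) < 1 + x)).hasDerivWithinAt
    (s := Ici 0)
  rw [hfunDeriv, abs_of_nonneg hx]
  exact hmodel.congr (fun y hy => hfun_of_nonneg θ hy) (hfun_of_nonneg θ hx)

theorem hfunDeriv_nonneg {θ : ℝ} (hθ : 0 ≤ θ) (ξ : ℝ) : 0 ≤ hfunDeriv θ ξ := by
  have ha : 1 ≤ 1 + |ξ| := le_add_of_nonneg_right (abs_nonneg ξ)
  have hpow : (1 + |ξ|) ^ (-θ) ≤ (1 + |ξ|) ^ θ :=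
    Real.rpow_le_rpow_of_exponent_le ha (by linarith)
  have hmid : 0 ≤ θ * |ξ| * (1 + |ξ|) ^ (θ - 1) := by positivity
  rw [hfunDeriv]
  linarith

theorem hfunDeriv_le {θ : ℝ} (hθ0 : 0 ≤ θ) (hθ1 : θ ≤ 1) (ξ : ℝ) :
    hfunDeriv θ ξ ≤ 3 * θ * |ξ| := by
  set s := |ξ| with hs
  have hs0 : 0 ≤ s := abs_nonneg ξ
  have ha : 1 ≤ 1 + s := le_add_of_nonneg_right hs0
  set x := (1 + s) ^ θ with hx
  have hbernoulli : x ≤ 1 + θ * s :=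
    rpow_one_add_le_one_add_mul_self (by linarith) hθ0 hθ1
  have hinv : (1 + s) ^ (-θ) = x⁻¹ := Real.rpow_neg (by linarith) θ
  have hx0 : 0 < x := by positivity
  -- `x + x⁻¹ ≥ 2`
  have hsub : x - x⁻¹ ≤ 2 * (x - 1) := by
    have hxinv : x * x⁻¹ = 1 := mul_inv_cancel₀ hx0.ne'
    nlinarith [mul_nonneg (inv_nonneg.mpr hx0.le) (sq_nonneg (x - 1))]
  have hmid : θ * s * (1 + s) ^ (θ - 1) ≤ θ * s := by
    have hle : (1 + s) ^ (θ - 1) ≤ 1 := Real.rpow_le_one_of_one_le_of_nonpos ha (by linarith)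
    exact mul_le_of_le_one_right (by positivity) hle
  rw [hfunDeriv, ← hs, ← hx, hinv]
  linarith

theorem abs_hfunDeriv_le {θ : ℝ} (hθ0 : 0 ≤ θ) (hθ1 : θ ≤ 1) (ξ : ℝ) :
    |hfunDeriv θ ξ| ≤ 3 * θ * |ξ| := by
  rw [abs_of_nonneg (hfunDeriv_nonneg hθ0 ξ)]
  exact hfunDeriv_le hθ0 hθ1 ξ

theorem stmt_14 (M : ℝ) (hM : 0 < M) :
    ∃ C : ℝ, 0 < C ∧
      ∀ θ : ℝ, 0 < θ → θ < 1 / 2 →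
        (∀ ξ : ℝ, |ξ| ≤ M → |deriv (hfun θ) ξ| ≤ C * θ) ∧
        (∀ ξ₁ ξ₂ : ℝ, ξ₁ ∈ Set.Icc (-M) M → ξ₂ ∈ Set.Icc (-M) M →
          |hfun θ ξ₁ - hfun θ ξ₂| ≤ C * θ * |ξ₁ - ξ₂|) := by
  refine ⟨3 * M, by positivity, fun θ hθ0 hθ => ?_⟩
  have hderiv (ξ : ℝ) : HasDerivAt (hfun θ) (hfunDeriv θ ξ) ξ := hasDerivAt_hfun (by linarith) ξ
  have hbound (ξ : ℝ) (hξ : |ξ| ≤ M) : |deriv (hfun θ) ξ| ≤ 3 * M * θ := by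
    rw [(hderiv ξ).deriv]
    calc |hfunDeriv θ ξ| ≤ 3 * θ * |ξ| := abs_hfunDeriv_le hθ0.le (by linarith) ξ
      _ ≤ 3 * M * θ := by nlinarith
  refine ⟨hbound, fun ξ₁ ξ₂ h₁ h₂ => ?_⟩
  simpa only [Real.norm_eq_abs] using (convex_Icc (-M) M).norm_image_sub_le_of_norm_deriv_le
    (fun x _ => (hderiv x).differentiableAt) (fun x hx => hbound x (abs_le.mpr hx)) h₂ h₁
end

section
/- Let 0 < θ < 1/2 and u, v ∈ ℝ. Then |u(1+|u|)^θ − v(1+|v|)^θ| ≤ (1+θ)[1 + (1−θ)|ξ|]^{2θ/(1−θ)} |Ψ_θ(u) − Ψ_θ(v)| for some ξ between Ψ_θ(u) and Ψ_θ(v), where Ψ_θ(ξ) = sgn(ξ)[(1+|ξ|)^{1−θ} − 1]/(1−θ). -/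
/-!
Put `η = Psi θ u` and `B = 1 + (1 - θ)|η|`. In the variable `η` the map `u ↦ u (1 + |u|)^θ`
becomes the odd extension of `B^((1+θ)/(1-θ)) - B^(θ/(1-θ))`, which is differentiable also at
`0` (both one-sided derivatives equal `1`), with derivative
`(1 + θ) B^(2θ/(1-θ)) - θ B^((2θ-1)/(1-θ))`. For `B ≥ 1` this lies between `0` and
`(1 + θ) B^(2θ/(1-θ))`, so the mean value theorem gives `ξ`.
-/

noncomputable def Psi (θ : ℝ) (ξ : ℝ) : ℝ :=
  Real.sign ξ * ((1 + |ξ|) ^ (1 - θ) - 1) / (1 - θ)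

open Set

noncomputable def oddExtension (H : ℝ → ℝ) (x : ℝ) : ℝ := Real.sign x * H |x|

theorem oddExtension_of_pos {H : ℝ → ℝ} {x : ℝ} (hx : 0 < x) : oddExtension H x = H x := by
  simp [oddExtension, Real.sign_of_pos hx, abs_of_pos hx]

theorem oddExtension_neg (H : ℝ → ℝ) (x : ℝ) : oddExtension H (-x) = -oddExtension H x := by
  simp [oddExtension, Real.sign_neg]

theorem hasDerivAt_oddExtension {H H' : ℝ → ℝ} (h0 : H 0 = 0)
    (hH : ∀ t, 0 ≤ t → HasDerivAt H (H' t) t) (x : ℝ) :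
    HasDerivAt (oddExtension H) (H' |x|) x := by
  have hright : ∀ y, 0 ≤ y → HasDerivWithinAt (oddExtension H) (H' |y|) (Ici 0) y := by
    intro y hy
    have hEq : EqOn (oddExtension H) H (Ici 0) := by
      intro z (hz : 0 ≤ z)
      rcases hz.eq_or_lt with rfl | hz
      · simp [oddExtension, h0]
      · simp [oddExtension, Real.sign_of_pos hz, abs_of_pos hz]
    rw [abs_of_nonneg hy]
    exact (hH y hy).hasDerivWithinAt.congr hEq (hEq hy)
  have hleft : ∀ y, y ≤ 0 → HasDerivWithinAt (oddExtension H) (H' |y|) (Iic 0) y := by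
    intro y hy
    have hEq : EqOn (oddExtension H) (fun z => -H (-z)) (Iic 0) := by
      intro z (hz : z ≤ 0)
      rcases hz.eq_or_lt with rfl | hz
      · simp [oddExtension, h0]
      · simp [oddExtension, Real.sign_of_neg hz, abs_of_neg hz]
    have hd : HasDerivAt (fun z => -H (-z)) (H' (-y)) y :=
      ((hH (-y) (neg_nonneg.mpr hy)).comp y (hasDerivAt_neg y)).neg.congr_deriv (by ring)
    rw [abs_of_nonpos hy]
    exact hd.hasDerivWithinAt.congr hEq (hEq hy)
  rcases lt_trichotomy x 0 with hx | rfl | hx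
  · exact (hleft x hx.le).hasDerivAt (Iic_mem_nhds hx)
  · simpa [Iic_union_Ici] using (hleft 0 le_rfl).union (hright 0 le_rfl)
  · exact (hright x hx.le).hasDerivAt (Ici_mem_nhds hx)

theorem exists_mem_uIcc_sub_eq_mul_sub {f f' : ℝ → ℝ} (hf : ∀ x, HasDerivAt f (f' x) x)
    (a b : ℝ) : ∃ ξ ∈ uIcc a b, f b - f a = f' ξ * (b - a) := by
  wlog hab : a ≤ b generalizing a b
  · obtain ⟨ξ, hξ, h⟩ := this b a (le_of_not_ge hab)
    exact ⟨ξ, uIcc_comm a b ▸ hξ, by linarith⟩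
  rcases hab.eq_or_lt with rfl | hab
  · exact ⟨a, by simp, by simp⟩
  obtain ⟨ξ, hξ, h⟩ := exists_hasDerivAt_eq_slope f f' hab
    (fun x _ => (hf x).continuousAt.continuousWithinAt) (fun x _ => hf x)
  refine ⟨ξ, Icc_subset_uIcc (Ioo_subset_Icc_self hξ), ?_⟩
  rw [h, div_mul_cancel₀ _ (sub_ne_zero.mpr hab.ne')]

section

variable {θ : ℝ}

-- `Φ_θ(t) (1 + Φ_θ(t))^θ` for `t ≥ 0`, where `Φ_θ(t) = (1 + (1-θ)t)^(1/(1-θ)) - 1` is the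
-- inverse of `Psi θ` on `[0, ∞)`.
noncomputable def phiMulPow (θ t : ℝ) : ℝ :=
  (1 + (1 - θ) * t) ^ ((1 + θ) / (1 - θ)) - (1 + (1 - θ) * t) ^ (θ / (1 - θ))

noncomputable def phiMulPowDeriv (θ t : ℝ) : ℝ :=
  (1 + θ) * (1 + (1 - θ) * t) ^ (2 * θ / (1 - θ)) -
    θ * (1 + (1 - θ) * t) ^ ((2 * θ - 1) / (1 - θ))

@[simp] theorem phiMulPow_zero (θ : ℝ) : phiMulPow θ 0 = 0 := by simp [phiMulPow]

theorem hasDerivAt_phiMulPow (hθ : θ ≠ 1) {t : ℝ} (ht : 0 < 1 + (1 - θ) * t) :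
    HasDerivAt (phiMulPow θ) (phiMulPowDeriv θ t) t := by
  have hθ' : 1 - θ ≠ 0 := sub_ne_zero.mpr hθ.symm
  have hB : HasDerivAt (fun t : ℝ => 1 + (1 - θ) * t) (1 - θ) t := by
    simpa using ((hasDerivAt_id t).const_mul (1 - θ)).const_add 1
  have h1 := (Real.hasDerivAt_rpow_const (p := (1 + θ) / (1 - θ)) (Or.inl ht.ne')).comp t hB
  have h2 := (Real.hasDerivAt_rpow_const (p := θ / (1 - θ)) (Or.inl ht.ne')).comp t hB
  refine (h1.sub h2).congr_deriv ?_
  have e1 : (1 + θ) / (1 - θ) - 1 = 2 * θ / (1 - θ) := by field_simp; ring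
  have e2 : θ / (1 - θ) - 1 = (2 * θ - 1) / (1 - θ) := by field_simp; ring
  rw [phiMulPowDeriv, e1, e2]
  field_simp

theorem abs_phiMulPowDeriv_le (hθ0 : 0 ≤ θ) (hθ1 : θ < 1) {t : ℝ} (ht : 0 ≤ t) :
    |phiMulPowDeriv θ t| ≤ (1 + θ) * (1 + (1 - θ) * t) ^ (2 * θ / (1 - θ)) := by
  have hB : 1 ≤ 1 + (1 - θ) * t := by nlinarith
  have hpow : (1 + (1 - θ) * t) ^ ((2 * θ - 1) / (1 - θ)) ≤
      (1 + (1 - θ) * t) ^ (2 * θ / (1 - θ)) :=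
    Real.rpow_le_rpow_of_exponent_le hB (by gcongr; linarith)
  have hnonneg : 0 ≤ (1 + (1 - θ) * t) ^ ((2 * θ - 1) / (1 - θ)) := by positivity
  rw [phiMulPowDeriv, abs_le]
  constructor <;> nlinarith

theorem phiMulPow_eq (hθ : θ ≠ 1) {t : ℝ} (ht : 0 < 1 + t) :
    phiMulPow θ (((1 + t) ^ (1 - θ) - 1) / (1 - θ)) = t * (1 + t) ^ θ := by
  have hθ' : 1 - θ ≠ 0 := sub_ne_zero.mpr hθ.symm
  have hB : 1 + (1 - θ) * (((1 + t) ^ (1 - θ) - 1) / (1 - θ)) = (1 + t) ^ (1 - θ) := by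
    field_simp; ring
  rw [phiMulPow, hB, ← Real.rpow_mul ht.le, ← Real.rpow_mul ht.le, mul_div_cancel₀ _ hθ',
    mul_div_cancel₀ _ hθ', add_comm 1 θ, Real.rpow_add_one ht.ne']
  ring

theorem Psi_neg (θ u : ℝ) : Psi θ (-u) = -Psi θ u := by
  simp only [Psi, Real.sign_neg, abs_neg]; ring

theorem Psi_of_pos {u : ℝ} (hu : 0 < u) : Psi θ u = ((1 + u) ^ (1 - θ) - 1) / (1 - θ) := by
  simp [Psi, Real.sign_of_pos hu, abs_of_pos hu]

theorem Psi_pos (hθ : θ ≠ 1) {u : ℝ} (hu : 0 < u) : 0 < Psi θ u := by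
  rw [Psi_of_pos hu]
  rcases hθ.lt_or_gt with hθ | hθ
  · exact div_pos (by simpa using Real.one_lt_rpow (by linarith) (by linarith)) (by linarith)
  · exact div_pos_of_neg_of_neg
      (by simpa using Real.rpow_lt_one_of_one_lt_of_neg (by linarith) (by linarith)) (by linarith)

theorem oddExtension_phiMulPow_Psi (hθ : θ ≠ 1) (u : ℝ) :
    oddExtension (phiMulPow θ) (Psi θ u) = u * (1 + |u|) ^ θ := by
  have hpos : ∀ u : ℝ, 0 < u → oddExtension (phiMulPow θ) (Psi θ u) = u * (1 + |u|) ^ θ := by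
    intro u hu
    rw [oddExtension_of_pos (Psi_pos hθ hu), Psi_of_pos hu, abs_of_pos hu,
      phiMulPow_eq hθ (by linarith)]
  rcases lt_trichotomy u 0 with hu | rfl | hu
  · rw [← neg_neg u, Psi_neg, oddExtension_neg, hpos (-u) (by linarith)]
    simp
  · simp [Psi, oddExtension]
  · exact hpos u hu

end

theorem stmt_15 (θ : ℝ) (hθ0 : 0 < θ) (hθ1 : θ < 1 / 2) (u v : ℝ) :
    ∃ ξ ∈ Set.uIcc (Psi θ u) (Psi θ v),
      |u * (1 + |u|) ^ θ - v * (1 + |v|) ^ θ| ≤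
        (1 + θ) * (1 + (1 - θ) * |ξ|) ^ (2 * θ / (1 - θ)) * |Psi θ u - Psi θ v| := by
  have hθ1' : θ < 1 := by linarith
  have hderiv : ∀ η, HasDerivAt (oddExtension (phiMulPow θ)) (phiMulPowDeriv θ |η|) η :=
    hasDerivAt_oddExtension (phiMulPow_zero θ) fun t ht =>
      hasDerivAt_phiMulPow hθ1'.ne (by nlinarith)
  obtain ⟨ξ, hξ, hmvt⟩ := exists_mem_uIcc_sub_eq_mul_sub hderiv (Psi θ u) (Psi θ v)
  refine ⟨ξ, hξ, ?_⟩
  rw [← oddExtension_phiMulPow_Psi hθ1'.ne u, ← oddExtension_phiMulPow_Psi hθ1'.ne v,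
    abs_sub_comm, hmvt, abs_mul, abs_sub_comm (Psi θ v)]
  exact mul_le_mul_of_nonneg_right (abs_phiMulPowDeriv_le hθ0.le hθ1' (abs_nonneg ξ))
    (abs_nonneg _)
end
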